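/- For every CQ q and every collection of labeled examples E = (E+,E−) with E+ finite and nonempty, the following are equivalent: (1) q is a most-specific fitting CQ for E; (2) q fits E and q is equivalent to the canonical CQ of the direct product Π_{e ∈ E+} e of the positive examples. -/

import Mathlib

/-! ## Basic setting: schemas, instances, homomorphisms, conjunctive queries -/

/-- A schema: a type of relation symbols, each with an associated arity. -/
structure Schema where
  Rel : Type
  arity : Rel → ℕ

/-- A fact over a schema `S`: a relation symbol of `S` applied to a tuple of values
(values are natural numbers) whose length is the arity of the symbol. -/
structure DBFact (S : Schema) where
  rel : S.Rel
  args : List ℕ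
  arity_eq : args.length = S.arity rel

/-- A database instance over `S`: a finite set of facts. -/
structure Instance (S : Schema) where
  facts : Set (DBFact S)
  finite : facts.Finite

/-- The active domain of an instance: all values occurring in its facts. -/
def Instance.adom {S : Schema} (I : Instance S) : Set ℕ :=
  { v | ∃ f ∈ I.facts, v ∈ f.args }

/-- The image of a fact under a map on values. -/
def DBFact.map {S : Schema} (h : ℕ → ℕ) (f : DBFact S) : DBFact S :=
  ⟨f.rel, f.args.map h, by simpa using f.arity_eq⟩

/-- `h` is a homomorphism from `I` to `J`: the image of every fact of `I` is a fact of `J`. -/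
def IsHom {S : Schema} (I J : Instance S) (h : ℕ → ℕ) : Prop :=
  ∀ f ∈ I.facts, f.map h ∈ J.facts

/-- A pointed instance: an instance together with a distinguished `k`-tuple of values. -/
abbrev PInst (S : Schema) (k : ℕ) := Instance S × (Fin k → ℕ)

/-- A pointed instance is a (valid) data example if its distinguished tuple lies in the
active domain. -/
def IsExample {S : Schema} {k : ℕ} (e : PInst S k) : Prop :=
  ∀ i, e.2 i ∈ e.1.adom

/-- `(I,a) → (J,b)`: there is a homomorphism from `I` to `J` mapping `a` to `b`. -/
def PHom {S : Schema} {k : ℕ} (e e' : PInst S k) : Prop :=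
  ∃ h : ℕ → ℕ, IsHom e.1 e'.1 h ∧ ∀ i, h (e.2 i) = e'.2 i

/-- A `k`-ary conjunctive query over `S`: a finite set of atoms (facts over variables,
where variables are natural numbers) together with a `k`-tuple of answer variables. -/
structure CQ (S : Schema) (k : ℕ) where
  atoms : Set (DBFact S)
  finite : atoms.Finite
  ans : Fin k → ℕ

/-- `q(I)`: the set of `k`-tuples `a` over the active domain of `I` such that some
assignment of the variables of `q` into `I` maps every atom to a fact of `I`
and the answer variables to `a`. -/
def CQ.eval {S : Schema} {k : ℕ} (q : CQ S k) (I : Instance S) : Set (Fin k → ℕ) :=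
  { a | (∀ i, a i ∈ I.adom) ∧
        ∃ h : ℕ → ℕ, (∀ f ∈ q.atoms, f.map h ∈ I.facts) ∧ ∀ i, h (q.ans i) = a i }

/-- Containment `q₁ ⊆ q₂` : `q₁(I) ⊆ q₂(I)` for all instances `I`. -/
def CQ.contained {S : Schema} {k : ℕ} (q₁ q₂ : CQ S k) : Prop :=
  ∀ I : Instance S, q₁.eval I ⊆ q₂.eval I

/-- Equivalence of CQs: mutual containment. -/
def CQ.equiv {S : Schema} {k : ℕ} (q₁ q₂ : CQ S k) : Prop :=
  q₁.contained q₂ ∧ q₂.contained q₁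

/-- A collection of labeled examples `E = (E⁺, E⁻)`. -/
structure LabeledExamples (S : Schema) (k : ℕ) where
  pos : Set (PInst S k)
  neg : Set (PInst S k)

/-- `q` fits `E`: every element of `E⁺` is a positive example for `q` and every element
of `E⁻` is a negative example for `q`. -/
def CQ.fits {S : Schema} {k : ℕ} (q : CQ S k) (E : LabeledExamples S k) : Prop :=
  (∀ e ∈ E.pos, e.2 ∈ q.eval e.1) ∧ (∀ e ∈ E.neg, e.2 ∉ q.eval e.1)

/-! ## Extremal fitting CQs -/

/-- `q` is a most-specific fitting CQ for `E`. -/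
def IsMostSpecificFit {S : Schema} {k : ℕ} (q : CQ S k) (E : LabeledExamples S k) : Prop :=
  q.fits E ∧ ∀ q' : CQ S k, q'.fits E → q.contained q'

/-- `q` is a strongly most-general fitting CQ for `E`. -/
def IsStronglyMostGeneralFit {S : Schema} {k : ℕ} (q : CQ S k) (E : LabeledExamples S k) : Prop :=
  q.fits E ∧ ∀ q' : CQ S k, q'.fits E → q'.contained q

/-- `q` is a weakly most-general fitting CQ for `E`. -/
def IsWeaklyMostGeneralFit {S : Schema} {k : ℕ} (q : CQ S k) (E : LabeledExamples S k) : Prop :=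
  q.fits E ∧ ∀ q' : CQ S k, q'.fits E → q.contained q' → q.equiv q'

/-- `B` is a (finite) basis of most-general fitting CQs for `E`. -/
def IsBasisOfMostGeneralFits {S : Schema} {k : ℕ} (B : Set (CQ S k))
    (E : LabeledExamples S k) : Prop :=
  B.Finite ∧ (∀ q ∈ B, q.fits E) ∧ ∀ q' : CQ S k, q'.fits E → ∃ q ∈ B, q'.contained q

/-! ## Canonical examples and relativized homomorphism dualities -/

/-- The canonical example `e_q` of a CQ `q`: its atoms as facts, pointed at the
answer variables. -/
def CQ.canonEx {S : Schema} {k : ℕ} (q : CQ S k) : PInst S k :=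
  (⟨q.atoms, q.finite⟩, q.ans)

/-- The canonical CQ of a pointed instance. -/
def canonCQ {S : Schema} {k : ℕ} (e : PInst S k) : CQ S k :=
  ⟨e.1.facts, e.1.finite, e.2⟩

/-- `(F, D)` is a homomorphism duality relative to the pointed instance `e`:
for every data example `e'` that maps homomorphically into `e`,
some element of `F` maps homomorphically into `e'` iff `e'` maps homomorphically
into no element of `D`. -/
def IsHomDualityRel {S : Schema} {k : ℕ} (e : PInst S k) (F D : Set (PInst S k)) : Prop :=
  ∀ e' : PInst S k, IsExample e' → PHom e' e →
    ((∃ f ∈ F, PHom f e') ↔ ∀ d ∈ D, ¬ PHom e' d)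

/-! ## Direct products -/

/-- The product of two facts with the same relation symbol, pairing values positionally
via the pairing function `Nat.pair`. -/
def DBFact.prod {S : Schema} (f g : DBFact S) (h : f.rel = g.rel) : DBFact S :=
  ⟨f.rel, List.zipWith Nat.pair f.args g.args, by
    rw [List.length_zipWith, f.arity_eq, g.arity_eq, h, min_self]⟩

/-- The direct product of two instances: all facts `R(⟨a₁,b₁⟩, …, ⟨aₙ,bₙ⟩)` with
`R(a₁,…,aₙ)` a fact of `I` and `R(b₁,…,bₙ)` a fact of `J`. -/
def Instance.prod {S : Schema} (I J : Instance S) : Instance S where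
  facts := { f | ∃ g ∈ I.facts, ∃ g' ∈ J.facts, ∃ h : g.rel = g'.rel, f = DBFact.prod g g' h }
  finite := by
    classical
    apply Set.Finite.subset (((I.finite.prod J.finite).image
      (fun p : DBFact S × DBFact S =>
        if h : p.1.rel = p.2.rel then DBFact.prod p.1 p.2 h else p.1)))
    rintro f ⟨g, hg, g', hg', h, rfl⟩
    exact ⟨(g, g'), ⟨hg, hg'⟩, dif_pos h⟩

/-- The direct product of two pointed instances. -/
def PInst.prod {S : Schema} {k : ℕ} (e e' : PInst S k) : PInst S k :=
  (e.1.prod e'.1, fun i => Nat.pair (e.2 i) (e'.2 i))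

/-! ## Path instances and path examples -/

/-- `I` is a path instance with chain values `a 0, …, a n` and chain relations
`R 1, …, R n`: its facts are the binary chain facts `R i (a (i-1), a i)` together
with unary facts on values `a j` with `j ≥ 1`. -/
def IsPathInstanceOn {S : Schema} (I : Instance S) (n : ℕ) (a : ℕ → ℕ) (R : ℕ → S.Rel) : Prop :=
  Set.InjOn a (Set.Iic n) ∧
  (∀ i, 1 ≤ i → i ≤ n → ∃ f ∈ I.facts, f.rel = R i ∧ f.args = [a (i - 1), a i]) ∧
  (∀ f ∈ I.facts,
      (∃ i, 1 ≤ i ∧ i ≤ n ∧ f.rel = R i ∧ f.args = [a (i - 1), a i]) ∨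
      (∃ j, 1 ≤ j ∧ j ≤ n ∧ f.args = [a j]))

/-- A path example: a unary pointed instance whose instance is a path instance and whose
distinguished value is the first value of the path. -/
def IsPathExample {S : Schema} (e : PInst S 1) : Prop :=
  ∃ (n : ℕ) (a : ℕ → ℕ) (R : ℕ → S.Rel), IsPathInstanceOn e.1 n a R ∧ e.2 0 = a 0

/-! The direct product is a categorical product for pointed homomorphisms, with projections
`n ↦ (Nat.unpair n).1, (Nat.unpair n).2` and pairing `x ↦ Nat.pair (h₁ x) (h₂ x)`. So the
canonical example of any CQ fitting the positive examples maps into their product `P`, which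
by Chandra–Merlin means that the CQ contains `canonCQ P`. Hence `canonCQ P` lies below every
fitting CQ, and it fits the negative examples as soon as some CQ fits `E`. -/

section Products

variable {S : Schema} {k : ℕ}

lemma DBFact.map_id (f : DBFact S) : f.map id = f := by
  cases f
  simp [DBFact.map]

lemma DBFact.map_map (g h : ℕ → ℕ) (f : DBFact S) :
    (f.map g).map h = f.map (h ∘ g) := by
  cases f
  simp [DBFact.map]

lemma DBFact.prod_map_unpair_fst (f g : DBFact S) (h : f.rel = g.rel) :
    (f.prod g h).map (fun n => n.unpair.1) = f := by
  have hlen : f.args.length = g.args.length := by rw [f.arity_eq, g.arity_eq, h]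
  cases f
  simp only [DBFact.prod, DBFact.map, DBFact.mk.injEq, true_and]
  rw [← List.map_uncurry_zip_eq_zipWith, List.map_map]
  simpa [Function.comp_def, Function.uncurry] using List.map_fst_zip hlen.le

lemma DBFact.prod_map_unpair_snd (f g : DBFact S) (h : f.rel = g.rel) :
    (f.prod g h).map (fun n => n.unpair.2) = g := by
  have hlen : f.args.length = g.args.length := by rw [f.arity_eq, g.arity_eq, h]
  cases g
  simp only [DBFact.prod, DBFact.map, DBFact.mk.injEq]
  refine ⟨h, ?_⟩
  rw [← List.map_uncurry_zip_eq_zipWith, List.map_map]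
  simpa [Function.comp_def, Function.uncurry] using List.map_snd_zip hlen.ge

lemma DBFact.prod_map_map (h₁ h₂ : ℕ → ℕ) (f : DBFact S) :
    (f.map h₁).prod (f.map h₂) rfl = f.map (fun x => Nat.pair (h₁ x) (h₂ x)) := by
  cases f
  simp [DBFact.prod, DBFact.map, List.zipWith_map, List.zipWith_self]

lemma PHom.refl (e : PInst S k) : PHom e e :=
  ⟨id, fun f hf => by rwa [f.map_id], fun _ => rfl⟩

lemma PHom.trans {e₁ e₂ e₃ : PInst S k} (h₁₂ : PHom e₁ e₂) (h₂₃ : PHom e₂ e₃) :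
    PHom e₁ e₃ := by
  obtain ⟨g, hg, hga⟩ := h₁₂
  obtain ⟨h, hh, hha⟩ := h₂₃
  refine ⟨h ∘ g, fun f hf => ?_, fun i => by simp [hga i, hha i]⟩
  rw [← DBFact.map_map]
  exact hh _ (hg f hf)

lemma PHom.prod_fst (e₁ e₂ : PInst S k) : PHom (e₁.prod e₂) e₁ := by
  refine ⟨fun n => n.unpair.1, ?_, fun i => by simp [PInst.prod]⟩
  rintro _ ⟨g, hg, g', -, h, rfl⟩
  rwa [DBFact.prod_map_unpair_fst]

lemma PHom.prod_snd (e₁ e₂ : PInst S k) : PHom (e₁.prod e₂) e₂ := by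
  refine ⟨fun n => n.unpair.2, ?_, fun i => by simp [PInst.prod]⟩
  rintro _ ⟨g, -, g', hg', h, rfl⟩
  rwa [DBFact.prod_map_unpair_snd]

lemma PHom.prod_mk {e e₁ e₂ : PInst S k} (H₁ : PHom e e₁) (H₂ : PHom e e₂) :
    PHom e (e₁.prod e₂) := by
  obtain ⟨h₁, hh₁, ha₁⟩ := H₁
  obtain ⟨h₂, hh₂, ha₂⟩ := H₂
  refine ⟨fun x => Nat.pair (h₁ x) (h₂ x), fun f hf => ?_, fun i => by
    simp [PInst.prod, ha₁ i, ha₂ i]⟩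
  exact ⟨f.map h₁, hh₁ f hf, f.map h₂, hh₂ f hf, rfl, (DBFact.prod_map_map h₁ h₂ f).symm⟩

lemma phom_prod_iff {e e₁ e₂ : PInst S k} :
    PHom e (e₁.prod e₂) ↔ PHom e e₁ ∧ PHom e e₂ :=
  ⟨fun h => ⟨h.trans (.prod_fst _ _), h.trans (.prod_snd _ _)⟩, fun h => h.1.prod_mk h.2⟩

lemma phom_foldl_prod_iff {e : PInst S k} (e₀ : PInst S k) (l : List (PInst S k)) :
    PHom e (l.foldl PInst.prod e₀) ↔ ∀ e' ∈ e₀ :: l, PHom e e' := by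
  induction l generalizing e₀ with
  | nil => simp
  | cons x l ih => simp [ih, phom_prod_iff, and_assoc]

end Products

section CanonicalCQ

variable {S : Schema} {k : ℕ}

lemma canonCQ_contained_of_phom {e : PInst S k} {q : CQ S k} (h : PHom q.canonEx e) :
    (canonCQ e).contained q :=
  fun I a ⟨hadom, he⟩ => ⟨hadom, h.trans (e₃ := (I, a)) he⟩

lemma canonCQ_foldl_prod_contained {e₀ : PInst S k} {l : List (PInst S k)} {q : CQ S k}
    (hq : ∀ e ∈ e₀ :: l, e.2 ∈ q.eval e.1) :
    (canonCQ (l.foldl PInst.prod e₀)).contained q :=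
  canonCQ_contained_of_phom <| (phom_foldl_prod_iff e₀ l).2 fun e he => (hq e he).2

lemma mem_eval_canonCQ_foldl_prod {e₀ e : PInst S k} {l : List (PInst S k)}
    (he : e ∈ e₀ :: l) (hex : IsExample e) :
    e.2 ∈ (canonCQ (l.foldl PInst.prod e₀)).eval e.1 :=
  ⟨hex, (phom_foldl_prod_iff e₀ l).1 (.refl _) e he⟩

lemma CQ.contained.trans {q₁ q₂ q₃ : CQ S k} (h₁₂ : q₁.contained q₂) (h₂₃ : q₂.contained q₃) :
    q₁.contained q₃ :=
  fun I => (h₁₂ I).trans (h₂₃ I)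

end CanonicalCQ

theorem mostSpecific_iff_equiv_canonCQ_of_product_general
    {S : Schema} {k : ℕ} (q : CQ S k) (E : LabeledExamples S k)
    (e₀ : PInst S k) (l : List (PInst S k))
    (henum : ∀ e : PInst S k, e ∈ (e₀ :: l) ↔ e ∈ E.pos) :
    IsMostSpecificFit q E ↔
      (q.fits E ∧ q.equiv (canonCQ (List.foldl PInst.prod e₀ l))) := by
  set p := canonCQ (List.foldl PInst.prod e₀ l)
  have p_contained : ∀ q' : CQ S k, q'.fits E → p.contained q' := fun q' hq' =>
    canonCQ_foldl_prod_contained fun e he => hq'.1 e ((henum e).1 he)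
  constructor
  · rintro ⟨hq, hmost⟩
    have hp : p.fits E :=
      ⟨fun e he => mem_eval_canonCQ_foldl_prod ((henum e).2 he) (hq.1 e he).1,
        fun e he hpe => hq.2 e he (p_contained q hq e.1 hpe)⟩
    exact ⟨hq, hmost p hp, p_contained q hq⟩
  · rintro ⟨hq, hqp, -⟩
    exact ⟨hq, fun q' hq' => hqp.trans (p_contained q' hq')⟩

/-- For every CQ `q` and collection of labeled examples `E` whose set of
positive examples is finite and nonempty (here enumerated by the nonempty list
`e₀ :: l`), the following are equivalent: (1) `q` is a most-specific fitting CQ for `E`;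
(2) `q` fits `E` and `q` is equivalent to the canonical CQ of the direct product of all
positive examples. -/
theorem mostSpecific_iff_equiv_canonCQ_of_product
    {S : Schema} {k : ℕ} (q : CQ S k) (E : LabeledExamples S k)
    (hpos : ∀ e ∈ E.pos, IsExample e) (hneg : ∀ e ∈ E.neg, IsExample e)
    (e₀ : PInst S k) (l : List (PInst S k))
    (henum : ∀ e : PInst S k, e ∈ (e₀ :: l) ↔ e ∈ E.pos) :
    IsMostSpecificFit q E ↔
      (q.fits E ∧ q.equiv (canonCQ (List.foldl PInst.prod e₀ l))) :=
  mostSpecific_iff_equiv_canonCQ_of_product_general q E e₀ l henum
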